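/- The ruler sequence x defined by x_i = ν_2(i+1) (the 2-adic valuation of i+1) is squarefree: no factor of x is of the form uu with u nonempty. -/
import Mathlib


/-- The ruler sequence (limit of the Zimin words): x_i = ν₂(i+1). -/
def ruler (i : ℕ) : ℕ := padicValNat 2 (i + 1)

lemma between_of_val_eq {a b : ℕ} (ha : 0 < a) (hab : a < b)
    (h : padicValNat 2 a = padicValNat 2 b) :
    ∃ c, a < c ∧ c < b ∧ padicValNat 2 a < padicValNat 2 c := by
  haveI : Fact (Nat.Prime 2) := ⟨Nat.prime_two⟩
  set m := padicValNat 2 a with hm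
  have hda : 2 ^ m ∣ a := pow_padicValNat_dvd
  have hdb : 2 ^ m ∣ b := h ▸ pow_padicValNat_dvd
  have hdc : 2 ^ (m + 1) ∣ a + 2 ^ m := by
    obtain ⟨q, hq⟩ := hda
    have hqodd : ¬ (2 ∣ q) := by
      intro ⟨r, hr⟩
      have : 2 ^ (m + 1) ∣ a := ⟨r, by rw [hq, hr]; ring⟩
      have := (padicValNat_dvd_iff_le (a := a) ha.ne').mp this
      omega
    obtain ⟨r, hr⟩ : 2 ∣ q + 1 := by omega
    exact ⟨r, by rw [hq, pow_succ, mul_assoc, ← hr, mul_add, mul_one]⟩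
  have hvc : m < padicValNat 2 (a + 2 ^ m) :=
    (padicValNat_dvd_iff_le (Nat.add_pos_left ha _).ne').mp hdc
  refine ⟨a + 2 ^ m, Nat.lt_add_of_pos_right (pow_pos two_pos m), ?_, hvc⟩
  -- show a + 2^m < b
  have hdd : 2 ^ m ∣ b - a := Nat.dvd_sub hdb hda
  have hba : 2 ^ m ≤ b - a := Nat.le_of_dvd (by omega) hdd
  rcases lt_or_eq_of_le hba with h1 | h1
  · omega
  · exfalso
    have : b = a + 2 ^ m := by omega
    rw [this] at h
    omega

/-- the ruler sequence is squarefree: no factor of it is of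
the form uu with u nonempty. -/
theorem ruler_squarefree :
    ¬ ∃ (i l : ℕ), 0 < l ∧ ∀ d < l, ruler (i + d) = ruler (i + l + d) := by
  rintro ⟨i, l, hl, hper⟩
  -- find d0 < 2l maximizing ruler (i + d0)
  obtain ⟨d0, hd0mem, hd0max⟩ := (Finset.range (2 * l)).exists_max_image
    (fun d => ruler (i + d)) ⟨0, Finset.mem_range.mpr (by omega)⟩
  rw [Finset.mem_range] at hd0mem
  -- get d1 < d2 < 2l with ruler (i+d1) = ruler (i+d2) = max
  obtain ⟨d1, d2, h12, h2l, he1, he2⟩ :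
      ∃ d1 d2, d1 < d2 ∧ d2 < 2 * l ∧ ruler (i + d1) = ruler (i + d0) ∧
        ruler (i + d2) = ruler (i + d0) := by
    rcases lt_or_ge d0 l with hc | hc
    · exact ⟨d0, d0 + l, by omega, by omega, rfl, by
        rw [hper d0 hc]; congr 1; omega⟩
    · refine ⟨d0 - l, d0, by omega, hd0mem, ?_, rfl⟩
      have := hper (d0 - l) (by omega)
      rw [this]
      congr 1
      omega
  obtain ⟨c, hc1, hc2, hc3⟩ := between_of_val_eq (a := i + d1 + 1) (b := i + d2 + 1)
    (by omega) (by omega) (by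
      have : ruler (i + d1) = ruler (i + d2) := he1.trans he2.symm
      simpa [ruler] using this)
  set d := c - i - 1 with hd
  have hdlt : d < 2 * l := by omega
  have : ruler (i + d) = padicValNat 2 c := by
    simp only [ruler]
    congr 1
    omega
  have hmax := hd0max d (Finset.mem_range.mpr hdlt)
  have : ruler (i + d0) < ruler (i + d) := by
    rw [this, ← he1]
    simpa [ruler] using hc3
  omega
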